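/- arXiv:2603.11124 — 3 statements merged into one kernel-verified Lean document; each statement's English description precedes it below -/
import Mathlib

section
/- For any absolutely continuous function F on [0,∞) with F(0)=0 and any 1<p<∞, if F' ∈ L^p(0,∞) then ∫₀^∞ |F(x)/x|^p dx ≤ (p/(p-1))^p ∫₀^∞ |F'(x)|^p dx. -/
open MeasureTheory Set
open scoped ENNReal

/-- Core Hardy inequality computation in `ℝ≥0∞`. -/
lemma hardy_core {p q : ℝ} (hpq : Real.HolderConjugate p q)
    (g : ℝ → ℝ≥0∞) (hg : Measurable g) :
    ∫⁻ x in Ioi (0:ℝ), (∫⁻ t in Ioc (0:ℝ) x, g t) ^ p * ENNReal.ofReal (x ^ (-p)) ≤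
      ENNReal.ofReal (q ^ p) * ∫⁻ t in Ioi (0:ℝ), g t ^ p := by
  have hp0 : 0 < p := hpq.pos
  have hq0 : 0 < q := hpq.symm.pos
  have hinv : 1/p + 1/q = 1 := by simpa [one_div] using hpq.inv_add_inv_eq_one
  set r : ℝ := 1/(p*q) with hr
  set c : ℝ := 1/p - 2 with hc
  have hc1 : c + 1 = -(1/q) := by rw [hc]; linarith
  have h1p : 1/p < 1 := by rw [div_lt_one hp0]; exact hpq.lt
  have hclt : c < -1 := by rw [hc]; linarith
  set H : ℝ → ℝ≥0∞ := fun t => g t ^ p * ENNReal.ofReal (t ^ (1/q)) with hH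
  have hHm : Measurable H :=
    (hg.pow_const p).mul ((measurable_id.pow_const (1/q)).ennreal_ofReal)
  set A : ℝ → ℝ≥0∞ := fun x => ∫⁻ t in Ioc (0:ℝ) x, H t with hA
  -- Hölder step
  have holder : ∀ x : ℝ, 0 < x →
      (∫⁻ t in Ioc (0:ℝ) x, g t) ≤ (A x) ^ (1/p) * ENNReal.ofReal (q * x ^ (1/q)) ^ (1/q) := by
    intro x hx
    have h1 : ∫⁻ t in Ioc (0:ℝ) x, g t
        = ∫⁻ t in Ioc (0:ℝ) x, (g t * ENNReal.ofReal (t ^ r)) * ENNReal.ofReal (t ^ (-r)) := by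
      refine (setLIntegral_congr_fun_ae measurableSet_Ioc (ae_of_all _ fun t ht => ?_)).symm
      rw [mul_assoc, ← ENNReal.ofReal_mul (Real.rpow_nonneg ht.1.le _),
        ← Real.rpow_add ht.1, add_neg_cancel, Real.rpow_zero, ENNReal.ofReal_one, mul_one]
    have h2 := ENNReal.lintegral_mul_le_Lp_mul_Lq (volume.restrict (Ioc (0:ℝ) x)) hpq
      (f := fun t => g t * ENNReal.ofReal (t ^ r)) (g := fun t => ENNReal.ofReal (t ^ (-r)))
      ((hg.mul ((measurable_id.pow_const r).ennreal_ofReal)).aemeasurable)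
      (((measurable_id.pow_const (-r)).ennreal_ofReal).aemeasurable)
    have hrp : r * p = 1/q := by
      rw [hr]; field_simp
    have hrq : -r * q = -(1/p) := by
      rw [hr]; field_simp
    have fac1 : ∫⁻ t in Ioc (0:ℝ) x, (g t * ENNReal.ofReal (t ^ r)) ^ p = A x := by
      refine setLIntegral_congr_fun_ae measurableSet_Ioc (ae_of_all _ fun t ht => ?_)
      rw [ENNReal.mul_rpow_of_nonneg _ _ hp0.le,
        ENNReal.ofReal_rpow_of_nonneg (Real.rpow_nonneg ht.1.le _) hp0.le,
        ← Real.rpow_mul ht.1.le, hrp]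
    have fac2 : ∫⁻ t in Ioc (0:ℝ) x, (ENNReal.ofReal (t ^ (-r))) ^ q
        = ENNReal.ofReal (q * x ^ (1/q)) := by
      have e1 : ∫⁻ t in Ioc (0:ℝ) x, (ENNReal.ofReal (t ^ (-r))) ^ q
          = ∫⁻ t in Ioc (0:ℝ) x, ENNReal.ofReal (t ^ (-(1/p))) := by
        refine setLIntegral_congr_fun_ae measurableSet_Ioc (ae_of_all _ fun t ht => ?_)
        rw [ENNReal.ofReal_rpow_of_nonneg (Real.rpow_nonneg ht.1.le _) hq0.le,
          ← Real.rpow_mul ht.1.le, hrq]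
      rw [e1]
      have hint : IntegrableOn (fun t : ℝ => t ^ (-(1/p))) (Ioc 0 x) := by
        have h := intervalIntegral.intervalIntegrable_rpow' (a := 0) (b := x)
          (r := -(1/p)) (by linarith)
        rwa [intervalIntegrable_iff_integrableOn_Ioc_of_le hx.le] at h
      rw [← ofReal_integral_eq_lintegral_ofReal hint
        ((ae_restrict_iff' measurableSet_Ioc).2 (ae_of_all _ fun t ht =>
          Real.rpow_nonneg ht.1.le _))]
      congr 1
      rw [← intervalIntegral.integral_of_le hx.le,
        integral_rpow (Or.inl (by linarith : (-1:ℝ) < -(1/p)))]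
      have h1q : -(1/p) + 1 = 1/q := by linarith
      rw [h1q, Real.zero_rpow (by positivity : (1/q : ℝ) ≠ 0), sub_zero, div_div_eq_mul_div, div_one, mul_comm]
    calc ∫⁻ t in Ioc (0:ℝ) x, g t
        = ∫⁻ t in Ioc (0:ℝ) x, (g t * ENNReal.ofReal (t ^ r)) * ENNReal.ofReal (t ^ (-r)) := h1
      _ ≤ (∫⁻ t in Ioc (0:ℝ) x, (g t * ENNReal.ofReal (t ^ r)) ^ p) ^ (1/p) *
          (∫⁻ t in Ioc (0:ℝ) x, (ENNReal.ofReal (t ^ (-r))) ^ q) ^ (1/q) := h2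
      _ = (A x) ^ (1/p) * ENNReal.ofReal (q * x ^ (1/q)) ^ (1/q) := by rw [fac1, fac2]
  -- pointwise power step
  have pt : ∀ x : ℝ, 0 < x →
      (∫⁻ t in Ioc (0:ℝ) x, g t) ^ p * ENNReal.ofReal (x ^ (-p)) ≤
        ENNReal.ofReal (q ^ (p/q)) * (ENNReal.ofReal (x ^ c) * A x) := by
    intro x hx
    have hb : (0:ℝ) ≤ q * x ^ (1/q) := by positivity
    have step1 : (∫⁻ t in Ioc (0:ℝ) x, g t) ^ p * ENNReal.ofReal (x ^ (-p)) ≤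
        ((A x) ^ (1/p) * ENNReal.ofReal (q * x ^ (1/q)) ^ (1/q)) ^ p *
          ENNReal.ofReal (x ^ (-p)) :=
      mul_le_mul_left (ENNReal.rpow_le_rpow (holder x hx) hp0.le) _
    refine step1.trans (le_of_eq ?_)
    rw [ENNReal.mul_rpow_of_nonneg _ _ hp0.le, ← ENNReal.rpow_mul, ← ENNReal.rpow_mul,
      one_div_mul_cancel hp0.ne', ENNReal.rpow_one,
      ENNReal.ofReal_rpow_of_nonneg hb (by positivity : (0:ℝ) ≤ 1/q * p)]
    have hqexp : (q * x ^ (1/q)) ^ (1/q * p) * x ^ (-p) = q ^ (p/q) * x ^ c := by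
      rw [Real.mul_rpow hq0.le (Real.rpow_nonneg hx.le _), ← Real.rpow_mul hx.le]
      have e2 : 1/q * p = p/q := by ring
      have e3 : 1/q * (p/q) + -p = c := by
        have h1q : 1/q = 1 - 1/p := by linarith
        rw [hc, h1q]; field_simp; linear_combination (1 - p) * hpq.mul_eq_add
      rw [mul_assoc, ← Real.rpow_add hx, e2, e3]
    calc A x * ENNReal.ofReal ((q * x ^ (1/q)) ^ (1/q * p)) * ENNReal.ofReal (x ^ (-p))
        = A x * ENNReal.ofReal ((q * x ^ (1/q)) ^ (1/q * p) * x ^ (-p)) := by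
          rw [mul_assoc, ← ENNReal.ofReal_mul (by positivity)]
      _ = A x * ENNReal.ofReal (q ^ (p/q) * x ^ c) := by rw [hqexp]
      _ = ENNReal.ofReal (q ^ (p/q)) * (ENNReal.ofReal (x ^ c) * A x) := by
          rw [ENNReal.ofReal_mul (by positivity)]; ring
  -- Tonelli step
  have tonelli : ∫⁻ x in Ioi (0:ℝ), ENNReal.ofReal (x ^ c) * A x
      = ∫⁻ t in Ioi (0:ℝ), H t * ENNReal.ofReal (q * t ^ (-(1/q))) := by
    set K : ℝ × ℝ → ℝ≥0∞ := fun z =>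
      ENNReal.ofReal (z.1 ^ c) * ({w : ℝ × ℝ | w.2 ≤ w.1}.indicator (fun w => H w.2) z) with hK
    have hKm : Measurable K :=
      ((measurable_fst.pow_const c).ennreal_ofReal).mul
        ((hHm.comp measurable_snd).indicator (measurableSet_le measurable_snd measurable_fst))
    have left : ∀ x ∈ Ioi (0:ℝ), ENNReal.ofReal (x ^ c) * A x = ∫⁻ t in Ioi (0:ℝ), K (x, t) := by
      intro x _
      have e : ∀ t : ℝ, K (x, t) = ENNReal.ofReal (x ^ c) * (Iic x).indicator H t := by
        intro t
        simp only [hK, Set.indicator_apply, mem_setOf_eq, mem_Iic]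
      simp_rw [e]
      rw [lintegral_const_mul' _ _ ENNReal.ofReal_ne_top,
        lintegral_indicator measurableSet_Iic, Measure.restrict_restrict measurableSet_Iic,
        Set.Iic_inter_Ioi]
    have right : ∀ t ∈ Ioi (0:ℝ),
        (∫⁻ x in Ioi (0:ℝ), K (x, t)) = H t * ENNReal.ofReal (q * t ^ (-(1/q))) := by
      intro t ht
      have e : ∀ x : ℝ, K (x, t) = (Ici t).indicator (fun x => ENNReal.ofReal (x ^ c) * H t) x := by
        intro x
        simp only [hK, Set.indicator_apply, mem_setOf_eq, mem_Ici]
        split_ifs <;> simp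
      simp_rw [e]
      rw [lintegral_indicator measurableSet_Ici, Measure.restrict_restrict measurableSet_Ici]
      have hsub : Ici t ∩ Ioi 0 = Ici t :=
        inter_eq_left.2 fun y hy => mem_Ioi.2 (lt_of_lt_of_le ht hy)
      rw [hsub, lintegral_mul_const _ ((measurable_id'.pow_const c).ennreal_ofReal),
        Measure.restrict_congr_set Ioi_ae_eq_Ici.symm]
      have hint : IntegrableOn (fun x : ℝ => x ^ c) (Ioi t) := integrableOn_Ioi_rpow_of_lt hclt ht
      rw [← ofReal_integral_eq_lintegral_ofReal hint
        ((ae_restrict_iff' measurableSet_Ioi).2 (ae_of_all _ fun y hy =>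
          Real.rpow_nonneg (le_of_lt (lt_trans ht hy)) _))]
      rw [integral_Ioi_rpow_of_lt hclt ht, hc1]
      rw [mul_comm]
      congr 1
      rw [neg_div_neg_eq, div_div_eq_mul_div, div_one, mul_comm]
    calc ∫⁻ x in Ioi (0:ℝ), ENNReal.ofReal (x ^ c) * A x
        = ∫⁻ x in Ioi (0:ℝ), ∫⁻ t in Ioi (0:ℝ), K (x, t) :=
          setLIntegral_congr_fun_ae measurableSet_Ioi (ae_of_all _ left)
      _ = ∫⁻ t in Ioi (0:ℝ), ∫⁻ x in Ioi (0:ℝ), K (x, t) :=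
          lintegral_lintegral_swap hKm.aemeasurable
      _ = ∫⁻ t in Ioi (0:ℝ), H t * ENNReal.ofReal (q * t ^ (-(1/q))) :=
          setLIntegral_congr_fun_ae measurableSet_Ioi (ae_of_all _ right)
  -- put everything together
  have hq' : q ^ (p/q) * q = q ^ p := by
    have : q ^ (p - 1) * q ^ (1:ℝ) = q ^ p := by
      rw [← Real.rpow_add hq0]; norm_num
    rw [hpq.div_conj_eq_sub_one]
    simpa using this
  calc ∫⁻ x in Ioi (0:ℝ), (∫⁻ t in Ioc (0:ℝ) x, g t) ^ p * ENNReal.ofReal (x ^ (-p))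
      ≤ ∫⁻ x in Ioi (0:ℝ), ENNReal.ofReal (q ^ (p/q)) * (ENNReal.ofReal (x ^ c) * A x) := by
        refine lintegral_mono_ae ?_
        filter_upwards [ae_restrict_mem measurableSet_Ioi] with x hx
        exact pt x hx
    _ = ENNReal.ofReal (q ^ (p/q)) * ∫⁻ x in Ioi (0:ℝ), ENNReal.ofReal (x ^ c) * A x :=
        lintegral_const_mul' _ _ ENNReal.ofReal_ne_top
    _ = ENNReal.ofReal (q ^ (p/q)) *
        ∫⁻ t in Ioi (0:ℝ), H t * ENNReal.ofReal (q * t ^ (-(1/q))) := by rw [tonelli]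
    _ = ENNReal.ofReal (q ^ p) * ∫⁻ t in Ioi (0:ℝ), g t ^ p := by
        rw [← lintegral_const_mul' _ _ ENNReal.ofReal_ne_top,
          ← lintegral_const_mul' _ _ ENNReal.ofReal_ne_top]
        refine setLIntegral_congr_fun_ae measurableSet_Ioi (ae_of_all _ fun t ht => ?_)
        have h1 : t ^ (1/q) * (q * t ^ (-(1/q))) = q := by
          rw [mul_left_comm, ← Real.rpow_add ht, add_neg_cancel, Real.rpow_zero, mul_one]
        calc ENNReal.ofReal (q ^ (p/q)) * (H t * ENNReal.ofReal (q * t ^ (-(1/q))))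
            = g t ^ p * (ENNReal.ofReal (q ^ (p/q)) *
              (ENNReal.ofReal (t ^ (1/q)) * ENNReal.ofReal (q * t ^ (-(1/q))))) := by
              rw [hH]; ring
          _ = g t ^ p * ENNReal.ofReal (q ^ (p/q) * (t ^ (1/q) * (q * t ^ (-(1/q))))) := by
              rw [← ENNReal.ofReal_mul (Real.rpow_nonneg (le_of_lt ht) _),
                ← ENNReal.ofReal_mul (Real.rpow_nonneg hq0.le _)]
          _ = ENNReal.ofReal (q ^ p) * g t ^ p := by
              rw [h1, hq', mul_comm]

/-- Classical Hardy inequality (1925): if `F` is absolutely continuous on `[0,∞)`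
(represented by `F x = ∫_0^x f`), `F 0 = 0`, `1 < p`, and `|f|^p` is integrable on `(0,∞)`,
then `∫_0^∞ |F x / x|^p dx ≤ (p/(p-1))^p ∫_0^∞ |f x|^p dx`. -/
theorem hardy_inequality (F f : ℝ → ℝ) (p : ℝ) (hp : 1 < p)
    (hF0 : F 0 = 0)
    (hloc : ∀ x : ℝ, 0 ≤ x → MeasureTheory.IntegrableOn f (Set.Ioc 0 x))
    (hAC : ∀ x : ℝ, 0 ≤ x → F x = ∫ t in Set.Ioc 0 x, f t)
    (hf : MeasureTheory.IntegrableOn (fun x => |f x| ^ p) (Set.Ioi (0 : ℝ))) :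
    ∫ x in Set.Ioi (0 : ℝ), |F x / x| ^ p ≤
      (p / (p - 1)) ^ p * ∫ x in Set.Ioi (0 : ℝ), |f x| ^ p := by
  have hp0 : 0 < p := lt_trans one_pos hp
  set q : ℝ := p / (p - 1) with hq_def
  have hpq : p.HolderConjugate q := Real.HolderConjugate.conjExponent hp
  have hq0 : 0 < q := hpq.symm.pos
  have hUnion : (⋃ n : ℕ, Ioc (0:ℝ) n) = Ioi 0 := by
    ext y
    simp only [mem_iUnion, mem_Ioc, mem_Ioi]
    constructor
    · rintro ⟨n, h, _⟩; exact h
    · intro hy; obtain ⟨n, hn⟩ := exists_nat_ge y; exact ⟨n, hy, hn⟩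
  have hfm : AEStronglyMeasurable f (volume.restrict (Ioi (0:ℝ))) := by
    rw [← hUnion]
    exact aestronglyMeasurable_iUnion_iff.2 fun n =>
      (hloc n n.cast_nonneg).aestronglyMeasurable
  obtain ⟨φ, hφm, hfφ⟩ := hfm
  set g : ℝ → ℝ≥0∞ := fun t => (‖φ t‖₊ : ℝ≥0∞) with hg_def
  have hgm : Measurable g := hφm.measurable.nnnorm.coe_nnreal_ennreal
  have hFbound : ∀ x : ℝ, 0 < x → ENNReal.ofReal |F x| ≤ ∫⁻ t in Ioc (0:ℝ) x, g t := by
    intro x hx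
    rw [hAC x hx.le, ← Real.enorm_eq_ofReal_abs]
    refine (enorm_integral_le_lintegral_enorm _).trans (le_of_eq (lintegral_congr_ae ?_))
    have hae := ae_restrict_of_ae_restrict_of_subset
      (Ioc_subset_Ioi_self : Ioc (0:ℝ) x ⊆ Ioi 0) hfφ
    filter_upwards [hae] with t ht
    show (‖f t‖₊ : ℝ≥0∞) = (‖φ t‖₊ : ℝ≥0∞)
    rw [ht]
  have hpt : ∀ x : ℝ, 0 < x →
      ENNReal.ofReal (|F x / x| ^ p) ≤
        (∫⁻ t in Ioc (0:ℝ) x, g t) ^ p * ENNReal.ofReal (x ^ (-p)) := by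
    intro x hx
    have h1 : |F x / x| ^ p = |F x| ^ p * x ^ (-p) := by
      rw [abs_div, abs_of_pos hx, Real.div_rpow (abs_nonneg _) hx.le, Real.rpow_neg hx.le,
        div_eq_mul_inv]
    rw [h1, ENNReal.ofReal_mul (Real.rpow_nonneg (abs_nonneg _) _),
      ← ENNReal.ofReal_rpow_of_nonneg (abs_nonneg _) hp0.le]
    exact mul_le_mul_left (ENNReal.rpow_le_rpow (hFbound x hx) hp0.le) _
  have hrhs : ∫⁻ t in Ioi (0:ℝ), g t ^ p
      = ENNReal.ofReal (∫ x in Ioi (0:ℝ), |f x| ^ p) := by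
    rw [ofReal_integral_eq_lintegral_ofReal hf
      (ae_of_all _ fun x => Real.rpow_nonneg (abs_nonneg _) _)]
    refine lintegral_congr_ae ?_
    filter_upwards [hfφ] with t ht
    show (‖φ t‖₊ : ℝ≥0∞) ^ p = ENNReal.ofReal (|f t| ^ p)
    rw [← enorm_eq_nnnorm, Real.enorm_eq_ofReal_abs, ← ht,
      ENNReal.ofReal_rpow_of_nonneg (abs_nonneg _) hp0.le]
  have hum : AEStronglyMeasurable (fun x => |F x / x| ^ p) (volume.restrict (Ioi (0:ℝ))) := by
    set G₀ : ℝ → ℝ := fun x => ∫ t in Ioc (0:ℝ) x, f t with hG0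
    have hG₀m : AEStronglyMeasurable G₀ (volume.restrict (Ioi (0:ℝ))) := by
      rw [← hUnion]
      refine aestronglyMeasurable_iUnion_iff.2 fun n => ?_
      have hInt : IntegrableOn f (Icc (0:ℝ) n) :=
        (hloc n n.cast_nonneg).congr_set_ae Ioc_ae_eq_Icc.symm
      have hcont : ContinuousOn G₀ (Icc (0:ℝ) n) := intervalIntegral.continuousOn_primitive hInt
      exact (hcont.aestronglyMeasurable measurableSet_Icc).mono_measure
        (Measure.restrict_mono Ioc_subset_Icc_self le_rfl)
    have heq : (fun x => |F x / x| ^ p)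
        =ᵐ[volume.restrict (Ioi (0:ℝ))] fun x => |G₀ x / x| ^ p := by
      filter_upwards [ae_restrict_mem measurableSet_Ioi] with x hx
      rw [hAC x (le_of_lt hx)]
    refine AEStronglyMeasurable.congr ?_ heq.symm
    exact ((continuous_abs.measurable.comp_aemeasurable
      (hG₀m.aemeasurable.div aemeasurable_id)).pow_const p).aestronglyMeasurable
  have hLHS : ∫ x in Ioi (0:ℝ), |F x / x| ^ p
      = (∫⁻ x in Ioi (0:ℝ), ENNReal.ofReal (|F x / x| ^ p)).toReal := by
    rw [integral_eq_lintegral_of_nonneg_ae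
      (ae_of_all _ fun x => Real.rpow_nonneg (abs_nonneg _) _) hum]
  have hchain : ∫⁻ x in Ioi (0:ℝ), ENNReal.ofReal (|F x / x| ^ p)
      ≤ ENNReal.ofReal (q ^ p) * ENNReal.ofReal (∫ x in Ioi (0:ℝ), |f x| ^ p) := by
    rw [← hrhs]
    refine le_trans ?_ (hardy_core hpq g hgm)
    refine lintegral_mono_ae ?_
    filter_upwards [ae_restrict_mem measurableSet_Ioi] with x hx
    exact hpt x hx
  rw [hLHS]
  have hfin : ENNReal.ofReal (q ^ p) * ENNReal.ofReal (∫ x in Ioi (0:ℝ), |f x| ^ p) ≠ ⊤ :=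
    ENNReal.mul_ne_top ENNReal.ofReal_ne_top ENNReal.ofReal_ne_top
  refine le_trans (ENNReal.toReal_mono hfin hchain) (le_of_eq ?_)
  rw [← ENNReal.ofReal_mul (Real.rpow_nonneg hq0.le _), ENNReal.toReal_ofReal]
  exact mul_nonneg (Real.rpow_nonneg hq0.le _)
    (integral_nonneg fun x => Real.rpow_nonneg (abs_nonneg _) _)
end

section
/- Let f: [0,∞) → ℝ be nonnegative and measurable, and define F(x) = ∫₀^x f(t) dt. Then (∫₀^∞ x^{-4} F(x)^6 dx)^{1/6} ≤ C₂₆ (∫₀^∞ f(x)² dx)^{1/2} for some finite constant C₂₆ (e.g. C₂₆ = 1 suffices, though the paper uses the optimal Bliss constant). -/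
open MeasureTheory Set Real
open scoped ENNReal

lemma cs_sq {μ : MeasureTheory.Measure ℝ} {u v : ℝ → ℝ} (hu0 : 0 ≤ᵐ[μ] u) (hv0 : 0 ≤ᵐ[μ] v)
    (hum : AEStronglyMeasurable u μ) (hvm : AEStronglyMeasurable v μ)
    (hu2 : Integrable (fun t => u t ^ 2) μ) (hv2 : Integrable (fun t => v t ^ 2) μ) :
    (∫ t, u t * v t ∂μ) ^ 2 ≤ (∫ t, u t ^ 2 ∂μ) * (∫ t, v t ^ 2 ∂μ) := by
  have hpq : (2:ℝ).HolderConjugate 2 := Real.holderConjugate_iff.mpr ⟨one_lt_two, by norm_num⟩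
  have h2 : (ENNReal.ofReal (2:ℝ)) = 2 := by
    simp [ENNReal.ofReal_ofNat]
  have hu : MemLp u (ENNReal.ofReal 2) μ := by
    rw [h2]; exact (memLp_two_iff_integrable_sq hum).2 hu2
  have hv : MemLp v (ENNReal.ofReal 2) μ := by
    rw [h2]; exact (memLp_two_iff_integrable_sq hvm).2 hv2
  have h := integral_mul_le_Lp_mul_Lq_of_nonneg hpq hu0 hv0 hu hv
  have hru : (∫ t, u t ^ (2:ℝ) ∂μ) = ∫ t, u t ^ 2 ∂μ := by
    refine integral_congr_ae ?_
    filter_upwards with t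
    rw [show (2:ℝ) = ((2:ℕ):ℝ) by norm_num, Real.rpow_natCast]
  have hrv : (∫ t, v t ^ (2:ℝ) ∂μ) = ∫ t, v t ^ 2 ∂μ := by
    refine integral_congr_ae ?_
    filter_upwards with t
    rw [show (2:ℝ) = ((2:ℕ):ℝ) by norm_num, Real.rpow_natCast]
  rw [hru, hrv] at h
  have hI0 : 0 ≤ ∫ t, u t * v t ∂μ := by
    refine integral_nonneg_of_ae ?_
    filter_upwards [hu0, hv0] with t h1 h2 using mul_nonneg h1 h2
  have hu20 : 0 ≤ ∫ t, u t ^ 2 ∂μ := integral_nonneg fun t => sq_nonneg _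
  have hv20 : 0 ≤ ∫ t, v t ^ 2 ∂μ := integral_nonneg fun t => sq_nonneg _
  calc (∫ t, u t * v t ∂μ) ^ 2
      ≤ ((∫ t, u t ^ 2 ∂μ) ^ ((1:ℝ)/2) * (∫ t, v t ^ 2 ∂μ) ^ ((1:ℝ)/2)) ^ 2 := by
        apply pow_le_pow_left₀ hI0
        convert h using 3
    _ = (∫ t, u t ^ 2 ∂μ) * (∫ t, v t ^ 2 ∂μ) := by
        rw [mul_pow, ← Real.rpow_natCast (_ ^ ((1:ℝ)/2)) 2, ← Real.rpow_natCast (_ ^ ((1:ℝ)/2)) 2,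
          ← Real.rpow_mul hu20, ← Real.rpow_mul hv20]
        norm_num

/-- L²–L⁶ Hardy inequality (p=2, q=6, α=−4): for nonnegative measurable `f` on `(0,∞)`
with `f² ∈ L¹(0,∞)`, setting `F x = ∫_0^x f`,
`(∫_0^∞ x⁻⁴ F(x)⁶ dx)^{1/6} ≤ C₂₆ (∫_0^∞ f(x)² dx)^{1/2}` for some finite constant `C₂₆`. -/
theorem hardy_Lp_Lq :
    ∃ C : ℝ, 0 < C ∧
      ∀ f : ℝ → ℝ, Measurable f → (∀ x, 0 ≤ f x) →
        MeasureTheory.IntegrableOn (fun x => (f x) ^ 2) (Set.Ioi (0 : ℝ)) →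
        (∫ x in Set.Ioi (0 : ℝ),
            x ^ (-4 : ℝ) * (∫ t in Set.Ioc (0 : ℝ) x, f t) ^ 6) ^ ((1 : ℝ) / 6)
          ≤ C * (∫ x in Set.Ioi (0 : ℝ), (f x) ^ 2) ^ ((1 : ℝ) / 2) := by
  refine ⟨2, two_pos, ?_⟩
  intro f hf hf0 hf2
  set F : ℝ → ℝ := fun x => ∫ t in Ioc (0:ℝ) x, f t with hFdef
  set A : ℝ := ∫ x in Ioi (0:ℝ), f x ^ 2 with hAdef
  have hA0 : 0 ≤ A := setIntegral_nonneg measurableSet_Ioi (fun x _ => sq_nonneg _)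
  -- f is integrable on every Ioc 0 b
  have hfInt : ∀ b : ℝ, IntegrableOn f (Ioc 0 b) := by
    intro b
    rcases le_or_gt b 0 with hb | hb
    · rw [Ioc_eq_empty (by exact fun h => absurd hb (not_le.2 h))]
      exact integrableOn_empty
    · have h1 : IntegrableOn (fun t => 1 + f t ^ 2) (Ioc 0 b) := by
        refine (integrableOn_const ?_).add (hf2.mono_set Ioc_subset_Ioi_self)
        simp [Real.volume_Ioc]
      refine h1.mono' hf.aestronglyMeasurable.restrict (ae_of_all _ fun t => ?_)
      rw [Real.norm_of_nonneg (hf0 t)]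
      nlinarith [hf0 t, sq_nonneg (f t - 1)]
  have hFmono : Monotone F := by
    intro a b hab
    exact setIntegral_mono_set (hfInt b) (ae_of_all _ fun t => hf0 t)
      (HasSubset.Subset.eventuallyLE (Ioc_subset_Ioc_right hab))
  have hFmeas : Measurable F := hFmono.measurable
  have hF0 : ∀ x, 0 ≤ F x := fun x => setIntegral_nonneg measurableSet_Ioc fun t _ => hf0 t
  -- the weighted integrand
  have hWint : ∀ x : ℝ, 0 < x → IntegrableOn (fun t => t ^ ((3:ℝ)/4) * f t ^ 2) (Ioc 0 x) := by
    intro x hx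
    have hbig : IntegrableOn (fun t => x ^ ((3:ℝ)/4) * f t ^ 2) (Ioc 0 x) :=
      (hf2.mono_set Ioc_subset_Ioi_self).const_mul _
    refine hbig.mono' ?_ ?_
    · apply Measurable.aestronglyMeasurable
      fun_prop
    · filter_upwards [ae_restrict_mem measurableSet_Ioc] with t ht
      rw [Real.norm_of_nonneg (mul_nonneg (Real.rpow_nonneg ht.1.le _) (sq_nonneg _))]
      exact mul_le_mul_of_nonneg_right
        (Real.rpow_le_rpow ht.1.le ht.2 (by norm_num)) (sq_nonneg _)
  set W : ℝ → ℝ := fun x => ∫ t in Ioc (0:ℝ) x, t ^ ((3:ℝ)/4) * f t ^ 2 with hWdef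
  have hW0 : ∀ x, 0 ≤ W x := fun x =>
    setIntegral_nonneg measurableSet_Ioc fun t ht =>
      mul_nonneg (Real.rpow_nonneg ht.1.le _) (sq_nonneg _)
  -- pointwise key bound
  have key : ∀ x : ℝ, 0 < x →
      x ^ (-4:ℝ) * F x ^ 6 ≤ (4 * A ^ 2) * (x ^ (-(7:ℝ)/4) * W x) := by
    intro x hx
    have hioc := ae_restrict_mem (μ := volume) (measurableSet_Ioc (a := (0:ℝ)) (b := x))
    -- CS 1 : F x ^ 2 ≤ x * A
    have h1 : F x ^ 2 ≤ x * A := by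
      have hone : IntegrableOn (fun _ : ℝ => (1:ℝ)) (Ioc 0 x) volume :=
        integrableOn_const (by simp [Real.volume_Ioc])
      have hcs := cs_sq (μ := volume.restrict (Ioc (0:ℝ) x)) (u := fun _ => (1:ℝ)) (v := f)
        (ae_of_all _ fun _ => zero_le_one) (ae_of_all _ hf0)
        aestronglyMeasurable_const hf.aestronglyMeasurable.restrict
        (by simpa using hone)
        (hf2.mono_set Ioc_subset_Ioi_self)
      have e1 : (∫ t in Ioc (0:ℝ) x, (1:ℝ) * f t) = F x := by
        simp [hFdef]
      have e2 : (∫ t in Ioc (0:ℝ) x, (1:ℝ) ^ 2) = x := by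
        simp [Real.volume_Ioc, hx.le]
      rw [show (∫ t in Ioc (0:ℝ) x, (fun _ => (1:ℝ)) t * f t) = F x from e1,
        show (∫ t in Ioc (0:ℝ) x, (fun _ => (1:ℝ)) t ^ 2) = x from e2] at hcs
      refine hcs.trans ?_
      have hsub : (∫ t in Ioc (0:ℝ) x, f t ^ 2) ≤ A :=
        setIntegral_mono_set hf2 (ae_of_all _ fun t => sq_nonneg _)
          (HasSubset.Subset.eventuallyLE Ioc_subset_Ioi_self)
      exact mul_le_mul_of_nonneg_left hsub hx.le
    -- CS 2 : F x ^ 2 ≤ (4 x^{1/4}) * W x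
    have h2 : F x ^ 2 ≤ (4 * x ^ ((1:ℝ)/4)) * W x := by
      have hi : IntegrableOn (fun t : ℝ => t ^ (-(3:ℝ)/4)) (Ioc 0 x) volume :=
        (intervalIntegrable_iff_integrableOn_Ioc_of_le hx.le).1
          (intervalIntegral.intervalIntegrable_rpow' (by norm_num))
      have hsq38 : ∀ t : ℝ, 0 < t → (t ^ (-(3:ℝ)/8)) ^ 2 = t ^ (-(3:ℝ)/4) := by
        intro t ht
        rw [← Real.rpow_natCast (t ^ (-(3:ℝ)/8)) 2, ← Real.rpow_mul ht.le]
        norm_num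
      have hsq38' : ∀ t : ℝ, 0 < t → (t ^ ((3:ℝ)/8) * f t) ^ 2 = t ^ ((3:ℝ)/4) * f t ^ 2 := by
        intro t ht
        rw [mul_pow, ← Real.rpow_natCast (t ^ ((3:ℝ)/8)) 2, ← Real.rpow_mul ht.le]
        norm_num
      have hu2 : Integrable (fun t => (t ^ (-(3:ℝ)/8)) ^ 2) (volume.restrict (Ioc (0:ℝ) x)) := by
        refine hi.congr ?_
        filter_upwards [hioc] with t ht
        exact (hsq38 t ht.1).symm
      have hv2 : Integrable (fun t => (t ^ ((3:ℝ)/8) * f t) ^ 2)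
          (volume.restrict (Ioc (0:ℝ) x)) := by
        refine (hWint x hx).congr ?_
        filter_upwards [hioc] with t ht
        exact (hsq38' t ht.1).symm
      have hcs := cs_sq (μ := volume.restrict (Ioc (0:ℝ) x))
        (u := fun t => t ^ (-(3:ℝ)/8)) (v := fun t => t ^ ((3:ℝ)/8) * f t)
        (by filter_upwards [hioc] with t ht using Real.rpow_nonneg ht.1.le _)
        (by filter_upwards [hioc] with t ht using
          mul_nonneg (Real.rpow_nonneg ht.1.le _) (hf0 t))
        ((by fun_prop : Measurable fun t : ℝ => t ^ (-(3:ℝ)/8)).aestronglyMeasurable)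
        ((by fun_prop : Measurable fun t : ℝ => t ^ ((3:ℝ)/8) * f t).aestronglyMeasurable)
        hu2 hv2
      have e1 : (∫ t in Ioc (0:ℝ) x, t ^ (-(3:ℝ)/8) * (t ^ ((3:ℝ)/8) * f t)) = F x := by
        refine integral_congr_ae ?_
        filter_upwards [hioc] with t ht
        rw [← mul_assoc, ← Real.rpow_add ht.1]
        norm_num
      have e2 : (∫ t in Ioc (0:ℝ) x, (t ^ (-(3:ℝ)/8)) ^ 2) = 4 * x ^ ((1:ℝ)/4) := by
        rw [integral_congr_ae (g := fun t : ℝ => t ^ (-(3:ℝ)/4))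
          (by filter_upwards [hioc] with t ht using hsq38 t ht.1)]
        rw [← intervalIntegral.integral_of_le hx.le, integral_rpow (Or.inl (by norm_num)),
          Real.zero_rpow (by norm_num)]
        rw [show (-(3:ℝ)/4 + 1) = (1:ℝ)/4 by norm_num]
        ring
      have e3 : (∫ t in Ioc (0:ℝ) x, (t ^ ((3:ℝ)/8) * f t) ^ 2) = W x := by
        refine integral_congr_ae ?_
        filter_upwards [hioc] with t ht
        exact hsq38' t ht.1
      rw [e1, e2, e3] at hcs
      exact hcs
    -- combine
    have h6 : F x ^ 6 ≤ (x * A) * ((x * A) * ((4 * x ^ ((1:ℝ)/4)) * W x)) := by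
      have hxA : (0:ℝ) ≤ x * A := mul_nonneg hx.le hA0
      calc F x ^ 6 = (F x ^ 2) * ((F x ^ 2) * (F x ^ 2)) := by ring
        _ ≤ (x * A) * ((x * A) * ((4 * x ^ ((1:ℝ)/4)) * W x)) := by
            refine mul_le_mul h1 ?_ (mul_nonneg (sq_nonneg _) (sq_nonneg _)) hxA
            refine mul_le_mul h1 h2 (sq_nonneg _) hxA
    have hsq : x * x = x ^ (2:ℝ) := by
      rw [show (2:ℝ) = ((2:ℕ):ℝ) by norm_num, Real.rpow_natCast]; ring
    have hxp : x ^ (-4:ℝ) * (x ^ (2:ℝ) * x ^ ((1:ℝ)/4)) = x ^ (-(7:ℝ)/4) := by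
      rw [← Real.rpow_add hx, ← Real.rpow_add hx]
      norm_num
    calc x ^ (-4:ℝ) * F x ^ 6
        ≤ x ^ (-4:ℝ) * ((x * A) * ((x * A) * ((4 * x ^ ((1:ℝ)/4)) * W x))) :=
          mul_le_mul_of_nonneg_left h6 (Real.rpow_nonneg hx.le _)
      _ = (x ^ (-4:ℝ) * (x ^ (2:ℝ) * x ^ ((1:ℝ)/4))) * (4 * A ^ 2 * W x) := by
          rw [← hsq]; ring
      _ = (4 * A ^ 2) * (x ^ (-(7:ℝ)/4) * W x) := by rw [hxp]; ring
  -- lintegral machinery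
  have hH : Measurable (fun t : ℝ => ENNReal.ofReal (t ^ ((3:ℝ)/4) * f t ^ 2)) := by fun_prop
  set H : ℝ → ℝ≥0∞ := fun t => ENNReal.ofReal (t ^ ((3:ℝ)/4) * f t ^ 2) with hHdef
  have hAbar : ∫⁻ t in Ioi (0:ℝ), ENNReal.ofReal (f t ^ 2) = ENNReal.ofReal A :=
    (ofReal_integral_eq_lintegral_ofReal hf2 (ae_of_all _ fun t => sq_nonneg _)).symm
  have step1 : ∫⁻ x in Ioi (0:ℝ), ENNReal.ofReal (x ^ (-4:ℝ) * F x ^ 6)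
      ≤ ∫⁻ x in Ioi (0:ℝ), ENNReal.ofReal (4 * A ^ 2) *
          (ENNReal.ofReal (x ^ (-(7:ℝ)/4)) * ∫⁻ t in Ioc (0:ℝ) x, H t) := by
    refine lintegral_mono_ae ?_
    filter_upwards [ae_restrict_mem measurableSet_Ioi] with x hx
    have hWx : ENNReal.ofReal (W x) = ∫⁻ t in Ioc (0:ℝ) x, H t := by
      refine ofReal_integral_eq_lintegral_ofReal (hWint x hx) ?_
      filter_upwards [ae_restrict_mem measurableSet_Ioc] with t ht
      exact mul_nonneg (Real.rpow_nonneg ht.1.le _) (sq_nonneg _)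
    calc ENNReal.ofReal (x ^ (-4:ℝ) * F x ^ 6)
        ≤ ENNReal.ofReal ((4 * A ^ 2) * (x ^ (-(7:ℝ)/4) * W x)) :=
          ENNReal.ofReal_le_ofReal (key x hx)
      _ = ENNReal.ofReal (4 * A ^ 2) *
          (ENNReal.ofReal (x ^ (-(7:ℝ)/4)) * ENNReal.ofReal (W x)) := by
          rw [ENNReal.ofReal_mul (by positivity), ENNReal.ofReal_mul (Real.rpow_nonneg hx.le _)]
      _ = _ := by rw [hWx]
  -- Tonelli
  set S : Set (ℝ × ℝ) := {p | p.2 ≤ p.1} with hSdef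
  have hS : MeasurableSet S := measurableSet_le measurable_snd measurable_fst
  set K : ℝ → ℝ → ℝ≥0∞ := fun x t =>
    (ENNReal.ofReal (x ^ (-(7:ℝ)/4)) * H t) * S.indicator (fun _ => 1) (x, t) with hKdef
  have hKmeas : Measurable (Function.uncurry K) := by
    refine Measurable.mul (Measurable.mul ?_ (hH.comp measurable_snd)) ?_
    · apply Measurable.ennreal_ofReal
      fun_prop
    · exact (measurable_const.indicator hS)
  have swap : (∫⁻ x in Ioi (0:ℝ), ∫⁻ t in Ioi (0:ℝ), K x t) =
      ∫⁻ t in Ioi (0:ℝ), ∫⁻ x in Ioi (0:ℝ), K x t :=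
    lintegral_lintegral_swap hKmeas.aemeasurable
  have inner_eq : ∀ x ∈ Ioi (0:ℝ),
      ENNReal.ofReal (x ^ (-(7:ℝ)/4)) * (∫⁻ t in Ioc (0:ℝ) x, H t) =
        ∫⁻ t in Ioi (0:ℝ), K x t := by
    intro x _
    have hKt : (fun t => K x t) =
        fun t => (Iic x).indicator (fun t => ENNReal.ofReal (x ^ (-(7:ℝ)/4)) * H t) t := by
      funext t
      by_cases h : t ≤ x
      · simp [hKdef, hSdef, Set.indicator_of_mem, h, Set.mem_setOf_eq, mem_Iic]
      · simp [hKdef, hSdef, Set.indicator_of_notMem, h, mem_Iic]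
    rw [hKt, lintegral_indicator measurableSet_Iic, Measure.restrict_restrict measurableSet_Iic]
    rw [show Iic x ∩ Ioi (0:ℝ) = Ioc 0 x by ext y; simp [mem_Ioc, and_comm]]
    rw [lintegral_const_mul' _ _ ENNReal.ofReal_ne_top]
  have outer_eq : ∀ t ∈ Ioi (0:ℝ),
      (∫⁻ x in Ioi (0:ℝ), K x t) = ENNReal.ofReal ((4/3) * t ^ (-(3:ℝ)/4)) * H t := by
    intro t ht
    have hKx : (fun x => K x t) =
        fun x => (Ici t).indicator (fun x => ENNReal.ofReal (x ^ (-(7:ℝ)/4)) * H t) x := by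
      funext x
      by_cases h : t ≤ x
      · simp [hKdef, hSdef, Set.indicator_of_mem, h, Set.mem_setOf_eq, mem_Ici]
      · simp [hKdef, hSdef, Set.indicator_of_notMem, h, mem_Ici]
    rw [hKx, lintegral_indicator measurableSet_Ici, Measure.restrict_restrict measurableSet_Ici]
    rw [show Ici t ∩ Ioi (0:ℝ) = Ici t from
      inter_eq_left.2 fun y hy => mem_Ioi.2 (lt_of_lt_of_le ht hy)]
    rw [lintegral_mul_const' _ _ ENNReal.ofReal_ne_top]
    have hIci : (∫⁻ x in Ici t, ENNReal.ofReal (x ^ (-(7:ℝ)/4))) =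
        ∫⁻ x in Ioi t, ENNReal.ofReal (x ^ (-(7:ℝ)/4)) :=
      setLIntegral_congr (Filter.EventuallyEq.symm Ioi_ae_eq_Ici)
    rw [hIci]
    have hval : (∫⁻ x in Ioi t, ENNReal.ofReal (x ^ (-(7:ℝ)/4))) =
        ENNReal.ofReal ((4/3) * t ^ (-(3:ℝ)/4)) := by
      rw [← ofReal_integral_eq_lintegral_ofReal
        (integrableOn_Ioi_rpow_of_lt (by norm_num) ht) ?_]
      · rw [integral_Ioi_rpow_of_lt (by norm_num) ht]
        rw [show (-(7:ℝ)/4 + 1) = -(3:ℝ)/4 by norm_num]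
        congr 1
        ring
      · filter_upwards [ae_restrict_mem measurableSet_Ioi] with y hy
        exact Real.rpow_nonneg (le_of_lt (lt_trans ht hy)) _
    rw [hval]
  have big : (∫⁻ x in Ioi (0:ℝ), ENNReal.ofReal (x ^ (-4:ℝ) * F x ^ 6))
      ≤ ENNReal.ofReal (4 * A ^ 2) * (ENNReal.ofReal (4/3) * ENNReal.ofReal A) := by
    calc (∫⁻ x in Ioi (0:ℝ), ENNReal.ofReal (x ^ (-4:ℝ) * F x ^ 6))
        ≤ ∫⁻ x in Ioi (0:ℝ), ENNReal.ofReal (4 * A ^ 2) *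
            (ENNReal.ofReal (x ^ (-(7:ℝ)/4)) * ∫⁻ t in Ioc (0:ℝ) x, H t) := step1
      _ = ENNReal.ofReal (4 * A ^ 2) * ∫⁻ x in Ioi (0:ℝ),
            ENNReal.ofReal (x ^ (-(7:ℝ)/4)) * ∫⁻ t in Ioc (0:ℝ) x, H t :=
          lintegral_const_mul' _ _ ENNReal.ofReal_ne_top
      _ = ENNReal.ofReal (4 * A ^ 2) * ∫⁻ x in Ioi (0:ℝ), ∫⁻ t in Ioi (0:ℝ), K x t := by
          rw [setLIntegral_congr_fun_ae measurableSet_Ioi (ae_of_all _ inner_eq)]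
      _ = ENNReal.ofReal (4 * A ^ 2) * ∫⁻ t in Ioi (0:ℝ), ∫⁻ x in Ioi (0:ℝ), K x t := by
          rw [swap]
      _ = ENNReal.ofReal (4 * A ^ 2) * ∫⁻ t in Ioi (0:ℝ),
            ENNReal.ofReal ((4/3) * t ^ (-(3:ℝ)/4)) * H t := by
          rw [setLIntegral_congr_fun_ae measurableSet_Ioi (ae_of_all _ outer_eq)]
      _ = ENNReal.ofReal (4 * A ^ 2) * ∫⁻ t in Ioi (0:ℝ),
            ENNReal.ofReal (4/3) * ENNReal.ofReal (f t ^ 2) := by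
          congr 1
          refine setLIntegral_congr_fun_ae measurableSet_Ioi (ae_of_all _ fun t ht => ?_)
          rw [hHdef]
          rw [← ENNReal.ofReal_mul (mul_nonneg (by norm_num)
            (Real.rpow_nonneg (le_of_lt ht) _)), ← ENNReal.ofReal_mul (by norm_num)]
          congr 1
          rw [show (4:ℝ)/3 * t ^ (-(3:ℝ)/4) * (t ^ ((3:ℝ)/4) * f t ^ 2) =
            (t ^ (-(3:ℝ)/4) * t ^ ((3:ℝ)/4)) * ((4/3) * f t ^ 2) by ring,
            ← Real.rpow_add ht]
          norm_num
      _ = ENNReal.ofReal (4 * A ^ 2) * (ENNReal.ofReal (4/3) * ENNReal.ofReal A) := by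
          rw [lintegral_const_mul' _ _ ENNReal.ofReal_ne_top, hAbar]
  -- convert to real
  have hint_nonneg : 0 ≤ᵐ[volume.restrict (Ioi (0:ℝ))] fun x => x ^ (-4:ℝ) * F x ^ 6 := by
    filter_upwards [ae_restrict_mem measurableSet_Ioi] with x hx
    exact mul_nonneg (Real.rpow_nonneg (le_of_lt hx) _) (pow_nonneg (hF0 x) 6)
  have hint_meas : AEStronglyMeasurable (fun x => x ^ (-4:ℝ) * F x ^ 6)
      (volume.restrict (Ioi (0:ℝ))) := by
    apply Measurable.aestronglyMeasurable
    exact ((by fun_prop : Measurable fun x : ℝ => x ^ (-4:ℝ)).mul (hFmeas.pow_const 6))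
  have hle : (∫ x in Ioi (0:ℝ), x ^ (-4:ℝ) * F x ^ 6) ≤ 16/3 * A ^ 3 := by
    rw [integral_eq_lintegral_of_nonneg_ae hint_nonneg hint_meas]
    have hne : ENNReal.ofReal (4 * A ^ 2) * (ENNReal.ofReal (4/3) * ENNReal.ofReal A) ≠ ⊤ :=
      ENNReal.mul_ne_top ENNReal.ofReal_ne_top
        (ENNReal.mul_ne_top ENNReal.ofReal_ne_top ENNReal.ofReal_ne_top)
    calc (∫⁻ x in Ioi (0:ℝ), ENNReal.ofReal (x ^ (-4:ℝ) * F x ^ 6)).toReal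
        ≤ (ENNReal.ofReal (4 * A ^ 2) * (ENNReal.ofReal (4/3) * ENNReal.ofReal A)).toReal :=
          ENNReal.toReal_mono hne big
      _ = 16/3 * A ^ 3 := by
          rw [ENNReal.toReal_mul, ENNReal.toReal_mul, ENNReal.toReal_ofReal (by positivity),
            ENNReal.toReal_ofReal (by norm_num), ENNReal.toReal_ofReal hA0]
          ring
  have hbase0 : 0 ≤ ∫ x in Ioi (0:ℝ), x ^ (-4:ℝ) * F x ^ 6 :=
    setIntegral_nonneg measurableSet_Ioi fun x hx =>
      mul_nonneg (Real.rpow_nonneg (le_of_lt hx) _) (pow_nonneg (hF0 x) 6)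
  show (∫ x in Ioi (0:ℝ), x ^ (-4:ℝ) * F x ^ 6) ^ ((1:ℝ)/6) ≤ 2 * A ^ ((1:ℝ)/2)
  calc (∫ x in Ioi (0:ℝ), x ^ (-4:ℝ) * F x ^ 6) ^ ((1:ℝ)/6)
      ≤ (16/3 * A ^ 3) ^ ((1:ℝ)/6) := Real.rpow_le_rpow hbase0 hle (by norm_num)
    _ ≤ ((4 * A) ^ 3) ^ ((1:ℝ)/6) := by
        refine Real.rpow_le_rpow (by positivity) ?_ (by norm_num)
        nlinarith [pow_nonneg hA0 3]
    _ = (4 * A) ^ ((1:ℝ)/2) := by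
        rw [← Real.rpow_natCast (4 * A) 3, ← Real.rpow_mul (by positivity)]
        norm_num
    _ = 2 * A ^ ((1:ℝ)/2) := by
        rw [Real.mul_rpow (by norm_num) hA0]
        congr 1
        rw [show (4:ℝ) = 2 ^ (2:ℕ) by norm_num, ← Real.rpow_natCast 2 2,
          ← Real.rpow_mul (by norm_num)]
        norm_num
end

section
/- Let Ω=(0,L)³, β∈(0,1), S_β the slab (1−β)L<z<L, and u' ∈ H¹(S_β) (vector-valued) vanishing on the wall z=L in the trace sense. Then ∫_{S_β} |u'|² dx ≤ 3^{-2/3} C₂₆² β² L² ∫_{S_β} |∂_z u'|² dx, where C₂₆ is the constant from the L²–L⁶ Hardy inequality with weight (L−z)^{-4}. -/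
open MeasureTheory Set
open scoped ENNReal NNReal

private lemma phi_hasDeriv (z0 b t : ℝ) :
    HasDerivAt (fun s : ℝ => (s - z0) ^ 2 / 2 - (s - z0) ^ 4 / (12 * b ^ 2))
      ((t - z0) - (t - z0) ^ 3 / (3 * b ^ 2)) t := by
  have h1 : HasDerivAt (fun s : ℝ => s - z0) 1 t := (hasDerivAt_id t).sub_const z0
  have h2 := ((h1.pow 2).div_const 2).sub ((h1.pow 4).div_const (12 * b ^ 2))
  refine h2.congr_deriv ?_
  push_cast
  by_cases hb : b = 0
  · simp [hb]
  · field_simp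
    ring

private lemma W_hasDeriv (z0 b z : ℝ) :
    HasDerivAt (fun s : ℝ => 5 * b ^ 2 * (s - z0) / 12 - (s - z0) ^ 3 / 6
        + (s - z0) ^ 5 / (60 * b ^ 2))
      (5 * b ^ 2 / 12 - (z - z0) ^ 2 / 2 + (z - z0) ^ 4 / (12 * b ^ 2)) z := by
  have h1 : HasDerivAt (fun s : ℝ => s - z0) 1 z := (hasDerivAt_id z).sub_const z0
  have h2 := (((h1.const_mul (5 * b ^ 2)).div_const 12).sub ((h1.pow 3).div_const 6)).add
    ((h1.pow 5).div_const (60 * b ^ 2))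
  refine h2.congr_deriv ?_
  push_cast
  by_cases hb : b = 0
  · simp [hb]; ring
  · field_simp
    ring

/-- The fiberwise (one-dimensional) estimate, in `ℝ≥0∞` form:
`∫_{z0}^L |U|² ≤ (5/12) b² ∫_{z0}^L |f|²` where `U z = -∫_z^L f` and `b = L - z0`. -/
private lemma fiber_bound {E : Type*} [NormedAddCommGroup E] [NormedSpace ℝ E]
    (z0 L b : ℝ) (hb : 0 < b) (hbL : L = z0 + b)
    (f : ℝ → E) (hf : Measurable fun t => ‖f t‖)
    (U : ℝ → E) (hU : ∀ z ∈ Icc z0 L, U z = -(∫ t in Ioc z L, f t)) :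
    ∫⁻ z in Ioo z0 L, ENNReal.ofReal (‖U z‖ ^ 2)
      ≤ ENNReal.ofReal (5 * b ^ 2 / 12) * ∫⁻ t in Ioo z0 L, ENNReal.ofReal (‖f t‖ ^ 2) := by
  have hb2 : (b : ℝ) ^ 2 ≠ 0 := pow_ne_zero 2 hb.ne'
  have hz0L : z0 < L := by rw [hbL]; linarith
  set φ : ℝ → ℝ := fun t => (t - z0) - (t - z0) ^ 3 / (3 * b ^ 2) with hφdef
  set W : ℝ → ℝ := fun z => 5 * b ^ 2 / 12 - (z - z0) ^ 2 / 2 + (z - z0) ^ 4 / (12 * b ^ 2)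
    with hWdef
  set Φ : ℝ → ℝ := fun t => 5 * b ^ 2 * (t - z0) / 12 - (t - z0) ^ 3 / 6
    + (t - z0) ^ 5 / (60 * b ^ 2) with hΦdef
  have hφc : Continuous φ := by
    simp only [hφdef]; fun_prop
  have hWc : Continuous W := by
    simp only [hWdef]; fun_prop
  -- positivity of φ on (z0, L]
  have hφpos : ∀ t ∈ Ioc z0 L, 0 < φ t := by
    rintro t ⟨ht1, ht2⟩
    have h1 : 0 < t - z0 := by linarith
    have h2 : t - z0 ≤ b := by rw [hbL] at ht2; linarith
    have : φ t = ((t - z0) * (3 * b ^ 2) - (t - z0) ^ 3) / (3 * b ^ 2) := by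
      simp only [hφdef]; field_simp
    rw [this]
    apply div_pos
    · have h3 : (t - z0) ^ 2 ≤ b ^ 2 := pow_le_pow_left₀ h1.le h2 2
      have h4 : (t - z0) ^ 3 ≤ (t - z0) * b ^ 2 := by nlinarith
      nlinarith [mul_pos h1 (mul_pos hb hb)]
    · positivity
  -- nonnegativity of W on [z0, L]
  have hWnn : ∀ z ∈ Icc z0 L, 0 ≤ W z := by
    rintro z ⟨hz1, hz2⟩
    have h1 : 0 ≤ z - z0 := by linarith
    have h2 : z - z0 ≤ b := by rw [hbL] at hz2; linarith
    have : W z = (b ^ 2 - (z - z0) ^ 2) * (5 * b ^ 2 - (z - z0) ^ 2) / (12 * b ^ 2) := by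
      simp only [hWdef]; field_simp; ring
    rw [this]
    apply div_nonneg
    · have h3 : (z - z0) ^ 2 ≤ b ^ 2 := pow_le_pow_left₀ h1 h2 2
      apply mul_nonneg <;> nlinarith
    · positivity
  -- key polynomial inequality Φ ≤ (5 b²/12) φ
  have hΦle : ∀ t ∈ Icc z0 L, Φ t ≤ 5 * b ^ 2 / 12 * φ t := by
    rintro t ⟨ht1, ht2⟩
    have h1 : 0 ≤ t - z0 := by linarith
    have h2 : t - z0 ≤ b := by rw [hbL] at ht2; linarith
    have hdiff : 5 * b ^ 2 / 12 * φ t - Φ t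
        = (5 * b ^ 2 * (t - z0) ^ 3 - 3 * (t - z0) ^ 5) / (180 * b ^ 2) := by
      simp only [hφdef, hΦdef]; field_simp; ring
    have : 0 ≤ 5 * b ^ 2 / 12 * φ t - Φ t := by
      rw [hdiff]
      apply div_nonneg
      · have h3 : (t - z0) ^ 2 ≤ b ^ 2 := pow_le_pow_left₀ h1 h2 2
        have h4 : 0 ≤ (t - z0) ^ 3 := pow_nonneg h1 3
        nlinarith [mul_nonneg h4 (sub_nonneg.2 h3), mul_nonneg h4 (sq_nonneg b)]
      · positivity
    linarith
  -- antiderivative computations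
  have hWint : ∀ z ∈ Icc z0 L, ∫ t in z..L, φ t = W z := by
    rintro z ⟨hz1, hz2⟩
    rw [intervalIntegral.integral_eq_sub_of_hasDerivAt
      (fun t _ => phi_hasDeriv z0 b t) (hφc.intervalIntegrable z L)]
    simp only [hWdef]
    rw [hbL]
    field_simp
    ring
  have hΦint : ∀ t ∈ Icc z0 L, ∫ z in z0..t, W z = Φ t := by
    rintro t ⟨ht1, ht2⟩
    rw [intervalIntegral.integral_eq_sub_of_hasDerivAt
      (fun z _ => W_hasDeriv z0 b z) (hWc.intervalIntegrable z0 t)]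
    simp only [hΦdef]
    ring
  -- lintegral versions
  have key1 : ∀ z ∈ Ioo z0 L, ∫⁻ t in Ioc z L, ENNReal.ofReal (φ t)
      = ENNReal.ofReal (W z) := by
    rintro z ⟨hz1, hz2⟩
    rw [← ofReal_integral_eq_lintegral_ofReal (hφc.integrableOn_Ioc)
      ((ae_restrict_iff' measurableSet_Ioc).2 (Filter.Eventually.of_forall
        (fun t ht => (hφpos t ⟨hz1.trans ht.1, ht.2⟩).le)))]
    rw [← intervalIntegral.integral_of_le hz2.le, hWint z ⟨hz1.le, hz2.le⟩]
  have key2 : ∀ t ∈ Ioo z0 L, ∫⁻ z in Ioo z0 t, ENNReal.ofReal (W z)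
      = ENNReal.ofReal (Φ t) := by
    rintro t ⟨ht1, ht2⟩
    rw [setLIntegral_congr Ioo_ae_eq_Ioc]
    rw [← ofReal_integral_eq_lintegral_ofReal (hWc.integrableOn_Ioc)
      ((ae_restrict_iff' measurableSet_Ioc).2 (Filter.Eventually.of_forall
        (fun z hz => hWnn z ⟨hz.1.le, hz.2.trans ht2.le⟩)))]
    rw [← intervalIntegral.integral_of_le ht1.le, hΦint t ⟨ht1.le, ht2.le⟩]
  set T : Set ℝ := Ioo z0 L with hTdef
  set F : ℝ → ℝ≥0∞ := fun t => ENNReal.ofReal (‖f t‖ ^ 2) / ENNReal.ofReal (φ t) with hFdef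
  have hFmeas : Measurable F := by
    apply Measurable.div
    · exact (hf.pow_const 2).ennreal_ofReal
    · exact hφc.measurable.ennreal_ofReal
  have hsq : ∀ x y : ℝ≥0∞, x ≤ y → x ^ 2 ≤ y ^ 2 := by
    intro x y h; rw [pow_two, pow_two]; exact mul_le_mul' h h
  -- pointwise Cauchy-Schwarz step
  have hpt : ∀ z ∈ T, ENNReal.ofReal (‖U z‖ ^ 2)
      ≤ ENNReal.ofReal (W z) * ∫⁻ t in Ioc z L, F t := by
    rintro z hz
    obtain ⟨hz1, hz2⟩ := hz
    have hzIcc : z ∈ Icc z0 L := ⟨hz1.le, hz2.le⟩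
    have hnorm : ENNReal.ofReal ‖U z‖ ≤ ∫⁻ t in Ioc z L, ENNReal.ofReal ‖f t‖ := by
      rw [hU z hzIcc, norm_neg, ofReal_norm_eq_enorm]
      simp_rw [ofReal_norm_eq_enorm]
      exact enorm_integral_le_lintegral_enorm _
    set A : ℝ → ℝ≥0∞ := fun t => (ENNReal.ofReal (φ t)) ^ ((1 : ℝ) / 2) with hAdef
    set B : ℝ → ℝ≥0∞ := fun t => ENNReal.ofReal ‖f t‖ / (ENNReal.ofReal (φ t)) ^ ((1 : ℝ) / 2)
      with hBdef
    have hAne : ∀ t ∈ Ioc z L, A t ≠ 0 ∧ A t ≠ ∞ := by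
      intro t ht
      have hφt : 0 < φ t := hφpos t ⟨hz1.trans ht.1, ht.2⟩
      constructor
      · simp only [hAdef, ne_eq, ENNReal.rpow_eq_zero_iff, not_or]
        constructor
        · rintro ⟨h0, -⟩; exact absurd h0 (ENNReal.ofReal_pos.2 hφt).ne'
        · rintro ⟨h0, -⟩; exact ENNReal.ofReal_ne_top h0
      · exact ENNReal.rpow_ne_top_of_nonneg (by norm_num) ENNReal.ofReal_ne_top
    have hAmeas : AEMeasurable A (volume.restrict (Ioc z L)) :=
      (hφc.measurable.ennreal_ofReal.pow_const _).aemeasurable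
    have hBmeas : AEMeasurable B (volume.restrict (Ioc z L)) :=
      ((hf.ennreal_ofReal).div (hφc.measurable.ennreal_ofReal.pow_const _)).aemeasurable
    have hconj : Real.HolderConjugate 2 2 := Real.HolderConjugate.two_two
    have hH := ENNReal.lintegral_mul_le_Lp_mul_Lq (volume.restrict (Ioc z L)) hconj hAmeas hBmeas
    have hAB : ∀ t ∈ Ioc z L, (A * B) t = ENNReal.ofReal ‖f t‖ := by
      intro t ht
      obtain ⟨hA0, hAtop⟩ := hAne t ht
      simp only [Pi.mul_apply, hBdef]
      exact ENNReal.mul_div_cancel hA0 hAtop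
    have hA2 : ∀ t, A t ^ (2 : ℝ) = ENNReal.ofReal (φ t) := by
      intro t
      simp only [hAdef]
      rw [← ENNReal.rpow_mul]
      norm_num
    have hB2 : ∀ t ∈ Ioc z L, B t ^ (2 : ℝ) = F t := by
      intro t ht
      simp only [hBdef, hFdef]
      rw [ENNReal.div_rpow_of_nonneg _ _ (by norm_num : (0:ℝ) ≤ 2)]
      rw [← ENNReal.rpow_mul]
      norm_num
    calc ENNReal.ofReal (‖U z‖ ^ 2) = (ENNReal.ofReal ‖U z‖) ^ 2 :=
          ENNReal.ofReal_pow (norm_nonneg _) 2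
      _ ≤ (∫⁻ t in Ioc z L, ENNReal.ofReal ‖f t‖) ^ 2 := hsq _ _ hnorm
      _ = (∫⁻ t in Ioc z L, (A * B) t) ^ 2 := by
          rw [setLIntegral_congr_fun measurableSet_Ioc
            (fun t ht => (hAB t ht).symm)]
      _ ≤ ((∫⁻ t in Ioc z L, A t ^ (2:ℝ)) ^ ((1:ℝ)/2)
            * (∫⁻ t in Ioc z L, B t ^ (2:ℝ)) ^ ((1:ℝ)/2)) ^ 2 := hsq _ _ hH
      _ = (∫⁻ t in Ioc z L, A t ^ (2:ℝ)) * (∫⁻ t in Ioc z L, B t ^ (2:ℝ)) := by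
          rw [mul_pow, ← ENNReal.rpow_natCast (_ ^ _) 2, ← ENNReal.rpow_natCast (_ ^ _) 2,
            ← ENNReal.rpow_mul, ← ENNReal.rpow_mul]
          norm_num
      _ = ENNReal.ofReal (W z) * ∫⁻ t in Ioc z L, F t := by
          congr 1
          · rw [show (fun t => A t ^ (2:ℝ)) = fun t => ENNReal.ofReal (φ t) from
              funext hA2]
            exact key1 z ⟨hz1, hz2⟩
          · exact setLIntegral_congr_fun measurableSet_Ioc
              (fun t ht => hB2 t ht)
  -- rewrite inner integral with indicator over T
  have hindicator : ∀ z ∈ T, ∫⁻ t in Ioc z L, F t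
      = ∫⁻ t in T, (Ioi z).indicator F t := by
    rintro z ⟨hz1, hz2⟩
    have hset : Ioi z ∩ T = Ioo z L := by
      ext t
      simp only [hTdef, mem_inter_iff, mem_Ioi, mem_Ioo]
      constructor
      · rintro ⟨h1, _, h3⟩; exact ⟨h1, h3⟩
      · rintro ⟨h1, h2⟩; exact ⟨h1, hz1.trans h1, h2⟩
    rw [lintegral_indicator measurableSet_Ioi, Measure.restrict_restrict measurableSet_Ioi,
      hset]
    exact (setLIntegral_congr Ioo_ae_eq_Ioc).symm
  -- main chain
  have hmain : ∫⁻ z in T, ENNReal.ofReal (‖U z‖ ^ 2)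
      ≤ ENNReal.ofReal (5 * b ^ 2 / 12) * ∫⁻ t in T, ENNReal.ofReal (‖f t‖ ^ 2) := by
    have step1 : ∫⁻ z in T, ENNReal.ofReal (‖U z‖ ^ 2)
        ≤ ∫⁻ z in T, ∫⁻ t in T, ENNReal.ofReal (W z) * (Ioi z).indicator F t := by
      apply setLIntegral_mono' measurableSet_Ioo
      intro z hz
      calc ENNReal.ofReal (‖U z‖ ^ 2) ≤ ENNReal.ofReal (W z) * ∫⁻ t in Ioc z L, F t :=
            hpt z hz
        _ = ENNReal.ofReal (W z) * ∫⁻ t in T, (Ioi z).indicator F t := by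
            rw [hindicator z hz]
        _ = ∫⁻ t in T, ENNReal.ofReal (W z) * (Ioi z).indicator F t :=
            (lintegral_const_mul' _ _ ENNReal.ofReal_ne_top).symm
    have hswap : ∫⁻ z in T, ∫⁻ t in T, ENNReal.ofReal (W z) * (Ioi z).indicator F t
        = ∫⁻ t in T, ∫⁻ z in T, ENNReal.ofReal (W z) * (Ioi z).indicator F t := by
      apply lintegral_lintegral_swap
      have heq : (Function.uncurry fun z t => ENNReal.ofReal (W z) * (Ioi z).indicator F t)
          = fun p : ℝ × ℝ => ENNReal.ofReal (W p.1)
              * {q : ℝ × ℝ | q.1 < q.2}.indicator (fun q => F q.2) p := by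
        funext p
        simp only [Function.uncurry]
        by_cases h : p.1 < p.2
        · simp [indicator_apply, h]
        · simp [indicator_apply, h]
      rw [heq]
      exact ((hWc.measurable.comp measurable_fst).ennreal_ofReal.mul
        (((hFmeas.comp measurable_snd).indicator
          (measurableSet_lt measurable_fst measurable_snd)))).aemeasurable
    have step2 : ∫⁻ t in T, ∫⁻ z in T, ENNReal.ofReal (W z) * (Ioi z).indicator F t
        ≤ ∫⁻ t in T, ENNReal.ofReal (5 * b ^ 2 / 12) * ENNReal.ofReal (‖f t‖ ^ 2) := by
      apply setLIntegral_mono' measurableSet_Ioo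
      intro t ht
      have hφt : 0 < φ t := hφpos t ⟨ht.1, ht.2.le⟩
      have hFt : F t ≠ ∞ := by
        simp only [hFdef]
        exact (ENNReal.div_lt_top ENNReal.ofReal_ne_top (ENNReal.ofReal_pos.2 hφt).ne').ne
      have hinner : ∀ z, ENNReal.ofReal (W z) * (Ioi z).indicator F t
          = (Iio t).indicator (fun z => ENNReal.ofReal (W z) * F t) z := by
        intro z
        by_cases h : z < t
        · simp [indicator_apply, h]
        · simp [indicator_apply, h]
      have hset : Iio t ∩ T = Ioo z0 t := by
        ext z
        simp only [hTdef, mem_inter_iff, mem_Iio, mem_Ioo]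
        constructor
        · rintro ⟨h1, h2, _⟩; exact ⟨h2, h1⟩
        · rintro ⟨h1, h2⟩; exact ⟨h2, h1, h2.trans ht.2⟩
      calc ∫⁻ z in T, ENNReal.ofReal (W z) * (Ioi z).indicator F t
          = ∫⁻ z in T, (Iio t).indicator (fun z => ENNReal.ofReal (W z) * F t) z := by
            simp_rw [hinner]
        _ = ∫⁻ z in Ioo z0 t, ENNReal.ofReal (W z) * F t := by
            rw [lintegral_indicator measurableSet_Iio,
              Measure.restrict_restrict measurableSet_Iio, hset]
        _ = (∫⁻ z in Ioo z0 t, ENNReal.ofReal (W z)) * F t :=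
            lintegral_mul_const' _ _ hFt
        _ = ENNReal.ofReal (Φ t) * F t := by rw [key2 t ht]
        _ ≤ ENNReal.ofReal (5 * b ^ 2 / 12 * φ t) * F t :=
            mul_le_mul_left (ENNReal.ofReal_le_ofReal (hΦle t ⟨ht.1.le, ht.2.le⟩)) _
        _ = ENNReal.ofReal (5 * b ^ 2 / 12) * (ENNReal.ofReal (φ t) * F t) := by
            rw [ENNReal.ofReal_mul (by positivity), mul_assoc]
        _ = ENNReal.ofReal (5 * b ^ 2 / 12) * ENNReal.ofReal (‖f t‖ ^ 2) := by
            congr 1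
            simp only [hFdef]
            exact ENNReal.mul_div_cancel (ENNReal.ofReal_pos.2 hφt).ne' ENNReal.ofReal_ne_top
    calc ∫⁻ z in T, ENNReal.ofReal (‖U z‖ ^ 2)
        ≤ ∫⁻ z in T, ∫⁻ t in T, ENNReal.ofReal (W z) * (Ioi z).indicator F t := step1
      _ = ∫⁻ t in T, ∫⁻ z in T, ENNReal.ofReal (W z) * (Ioi z).indicator F t := hswap
      _ ≤ ∫⁻ t in T, ENNReal.ofReal (5 * b ^ 2 / 12) * ENNReal.ofReal (‖f t‖ ^ 2) := step2
      _ = ENNReal.ofReal (5 * b ^ 2 / 12) * ∫⁻ t in T, ENNReal.ofReal (‖f t‖ ^ 2) :=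
          lintegral_const_mul' _ _ ENNReal.ofReal_ne_top
  exact hmain

/-- Numeric bound: `5/12 ≤ 3^{-2/3} C₂₆²`. -/
private lemma const_bound :
    (5 : ℝ) / 12 ≤ (3 : ℝ) ^ (-(2 : ℝ) / 3)
      * ((1 / Real.sqrt 3) * (2 * Real.Gamma 3)
          / (Real.Gamma (1 / 2) * Real.Gamma (5 / 2))) ^ 2 := by
  have hG3 : Real.Gamma 3 = 2 := by
    rw [show (3 : ℝ) = ((2 : ℕ) : ℝ) + 1 by norm_num, Real.Gamma_nat_eq_factorial]
    norm_num
  have hG12 : Real.Gamma (1 / 2) = Real.sqrt Real.pi := Real.Gamma_one_half_eq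
  have hG32 : Real.Gamma (3 / 2) = 1 / 2 * Real.sqrt Real.pi := by
    rw [show (3 : ℝ) / 2 = 1 / 2 + 1 by norm_num, Real.Gamma_add_one (by norm_num), hG12]
  have hG52 : Real.Gamma (5 / 2) = 3 / 4 * Real.sqrt Real.pi := by
    rw [show (5 : ℝ) / 2 = 3 / 2 + 1 by norm_num, Real.Gamma_add_one (by norm_num), hG32]
    ring
  have hsπ : Real.sqrt Real.pi ^ 2 = Real.pi := Real.sq_sqrt Real.pi_pos.le
  have hs3 : Real.sqrt 3 ^ 2 = 3 := Real.sq_sqrt (by norm_num)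
  have hsπpos : 0 < Real.sqrt Real.pi := Real.sqrt_pos.2 Real.pi_pos
  have hs3pos : 0 < Real.sqrt 3 := Real.sqrt_pos.2 (by norm_num)
  have hC2 : ((1 / Real.sqrt 3) * (2 * Real.Gamma 3)
      / (Real.Gamma (1 / 2) * Real.Gamma (5 / 2))) ^ 2 = 256 / (27 * Real.pi ^ 2) := by
    rw [hG3, hG12, hG52]
    rw [div_pow, mul_pow, mul_pow, mul_pow, div_pow, hsπ, hs3]
    rw [one_pow]
    norm_num
    rw [mul_pow, hsπ]
    ring
  rw [hC2]
  -- bound the rpow factor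
  set x : ℝ := (3 : ℝ) ^ ((2 : ℝ) / 3) with hxdef
  have hxpos : 0 < x := Real.rpow_pos_of_pos (by norm_num) _
  have hx3 : x ^ 3 = 9 := by
    rw [hxdef, ← Real.rpow_natCast ((3:ℝ) ^ ((2:ℝ)/3)) 3, ← Real.rpow_mul (by norm_num)]
    norm_num
  have hxle : x ≤ 2.081 := by nlinarith [hxpos.le, hx3, sq_nonneg (x - 2.081), sq_nonneg (x + 2.081)]
  have hxinv : (3 : ℝ) ^ (-(2 : ℝ) / 3) = 1 / x := by
    rw [neg_div, Real.rpow_neg (by norm_num : (0:ℝ) ≤ 3), hxdef, one_div]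
  rw [hxinv]
  have hinvx : 1 / 2.081 ≤ 1 / x := one_div_le_one_div_of_le hxpos hxle
  have hπ2 : Real.pi ^ 2 ≤ 9.9225 := by nlinarith [Real.pi_lt_d2, Real.pi_pos]
  have hπ2pos : 0 < Real.pi ^ 2 := by positivity
  have hfrac : (256 : ℝ) / (27 * 9.9225) ≤ 256 / (27 * Real.pi ^ 2) := by
    apply div_le_div_of_nonneg_left (by norm_num) (by positivity)
    nlinarith
  have h2 : (5 : ℝ) / 12 ≤ 1 / 2.081 * (256 / (27 * 9.9225)) := by norm_num
  calc (5 : ℝ) / 12 ≤ 1 / 2.081 * (256 / (27 * 9.9225)) := h2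
    _ ≤ 1 / x * (256 / (27 * Real.pi ^ 2)) := by
        apply mul_le_mul hinvx hfrac (by norm_num) (by positivity)

/-- Lemma 3 of the paper: for a (vector-valued) fluctuation `u'` vanishing on the wall
`z = L`, with `g = ∂_z u'` on vertical fibers,
`∫_{S_β} |u'|² ≤ 3^{-2/3} C₂₆² β² L² ∫_{S_β} |∂_z u'|²`, where
`C₂₆ = (1/√3)(2Γ(3))/(Γ(1/2)Γ(5/2))` is the Bliss constant of the L²–L⁶ Hardy
inequality with weight `(L-z)⁻⁴`. -/
theorem near_wall_fluctuation_bound (L β : ℝ) (hL : 0 < L) (hβ : β ∈ Set.Ioo (0 : ℝ) 1)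
    (S : Set (ℝ × ℝ × ℝ))
    (hS : S = {p | p.1 ∈ Set.Ioo 0 L ∧ p.2.1 ∈ Set.Ioo 0 L ∧
      p.2.2 ∈ Set.Ioo ((1 - β) * L) L})
    (u g : ℝ × ℝ × ℝ → EuclideanSpace ℝ (Fin 3))
    (hu : Measurable u) (hg : Measurable g)
    (hfib : ∀ x y : ℝ, ∀ z ∈ Set.Icc ((1 - β) * L) L,
      IntegrableOn (fun t => g (x, y, t)) (Set.Ioc z L) ∧
      u (x, y, z) = -(∫ t in Set.Ioc z L, g (x, y, t)))
    (hg2 : IntegrableOn (fun p => ‖g p‖ ^ 2) S) :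
    ∫ p in S, ‖u p‖ ^ 2
      ≤ (3 : ℝ) ^ (-(2 : ℝ) / 3)
        * ((1 / Real.sqrt 3) * (2 * Real.Gamma 3)
            / (Real.Gamma (1 / 2) * Real.Gamma (5 / 2))) ^ 2
        * β ^ 2 * L ^ 2 * ∫ p in S, ‖g p‖ ^ 2 := by
  obtain ⟨hβ0, hβ1⟩ := hβ
  set z0 : ℝ := (1 - β) * L with hz0def
  set b : ℝ := β * L with hbdef
  have hb : 0 < b := by positivity
  have hbL : L = z0 + b := by rw [hz0def, hbdef]; ring
  set A : Set ℝ := Ioo (0 : ℝ) L with hAdef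
  set I : Set ℝ := Ioo z0 L with hIdef
  have hSprod : S = A ×ˢ (A ×ˢ I) := by
    rw [hS]
    ext p
    simp only [mem_setOf_eq, Set.mem_prod, hAdef, hIdef, hz0def]
  have hvol : (volume : Measure (ℝ × ℝ × ℝ)).restrict S
      = ((volume : Measure ℝ).restrict A).prod
          (((volume : Measure ℝ).restrict A).prod ((volume : Measure ℝ).restrict I)) := by
    rw [hSprod, Measure.volume_eq_prod, Measure.volume_eq_prod,
      Measure.prod_restrict, Measure.prod_restrict]
  -- measurable integrands
  have humeas : Measurable fun p : ℝ × ℝ × ℝ => ENNReal.ofReal (‖u p‖ ^ 2) :=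
    ((hu.norm).pow_const 2).ennreal_ofReal
  have hgmeas : Measurable fun p : ℝ × ℝ × ℝ => ENNReal.ofReal (‖g p‖ ^ 2) :=
    ((hg.norm).pow_const 2).ennreal_ofReal
  set c : ℝ≥0∞ := ENNReal.ofReal (5 * b ^ 2 / 12) with hcdef
  -- main lintegral inequality
  have hc_ne_top : c ≠ ∞ := ENNReal.ofReal_ne_top
  have hlin : ∫⁻ p in S, ENNReal.ofReal (‖u p‖ ^ 2)
      ≤ c * ∫⁻ p in S, ENNReal.ofReal (‖g p‖ ^ 2) := by
    have hfiber : ∀ x y : ℝ,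
        ∫⁻ z in I, ENNReal.ofReal (‖u (x, y, z)‖ ^ 2)
          ≤ c * ∫⁻ z in I, ENNReal.ofReal (‖g (x, y, z)‖ ^ 2) := by
      intro x y
      exact fiber_bound z0 L b hb hbL (fun t => g (x, y, t))
        ((hg.comp (measurable_prodMk_left.comp measurable_prodMk_left)).norm)
        (fun z => u (x, y, z)) (fun z hz => (hfib x y z hz).2)
    have hu_inner : ∀ x : ℝ,
        (∫⁻ q, ENNReal.ofReal (‖u (x, q)‖ ^ 2)
            ∂(((volume : Measure ℝ).restrict A).prod ((volume : Measure ℝ).restrict I)))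
          = ∫⁻ y in A, ∫⁻ z in I, ENNReal.ofReal (‖u (x, y, z)‖ ^ 2) := fun x =>
      lintegral_prod _ ((humeas.comp measurable_prodMk_left).aemeasurable)
    have hg_inner : ∀ x : ℝ,
        (∫⁻ q, ENNReal.ofReal (‖g (x, q)‖ ^ 2)
            ∂(((volume : Measure ℝ).restrict A).prod ((volume : Measure ℝ).restrict I)))
          = ∫⁻ y in A, ∫⁻ z in I, ENNReal.ofReal (‖g (x, y, z)‖ ^ 2) := fun x =>
      lintegral_prod _ ((hgmeas.comp measurable_prodMk_left).aemeasurable)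
    rw [hvol, lintegral_prod _ humeas.aemeasurable, lintegral_prod _ hgmeas.aemeasurable]
    calc ∫⁻ x in A, ∫⁻ q, ENNReal.ofReal (‖u (x, q)‖ ^ 2)
          ∂(((volume : Measure ℝ).restrict A).prod ((volume : Measure ℝ).restrict I))
        = ∫⁻ x in A, ∫⁻ y in A, ∫⁻ z in I, ENNReal.ofReal (‖u (x, y, z)‖ ^ 2) :=
          lintegral_congr fun x => hu_inner x
      _ ≤ ∫⁻ x in A, ∫⁻ y in A, c * ∫⁻ z in I, ENNReal.ofReal (‖g (x, y, z)‖ ^ 2) :=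
          lintegral_mono fun x => lintegral_mono fun y => hfiber x y
      _ = ∫⁻ x in A, c * ∫⁻ y in A, ∫⁻ z in I, ENNReal.ofReal (‖g (x, y, z)‖ ^ 2) :=
          lintegral_congr fun x => lintegral_const_mul' _ _ hc_ne_top
      _ = c * ∫⁻ x in A, ∫⁻ y in A, ∫⁻ z in I, ENNReal.ofReal (‖g (x, y, z)‖ ^ 2) :=
          lintegral_const_mul' _ _ hc_ne_top
      _ = c * ∫⁻ x in A, ∫⁻ q, ENNReal.ofReal (‖g (x, q)‖ ^ 2)
          ∂(((volume : Measure ℝ).restrict A).prod ((volume : Measure ℝ).restrict I)) := by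
          rw [lintegral_congr fun x => (hg_inner x).symm]
  -- convert to Bochner integrals
  have hgnn : 0 ≤ᵐ[volume.restrict S] fun p => ‖g p‖ ^ 2 :=
    Filter.Eventually.of_forall fun p => by positivity
  have hgl : ENNReal.ofReal (∫ p in S, ‖g p‖ ^ 2)
      = ∫⁻ p in S, ENNReal.ofReal (‖g p‖ ^ 2) :=
    ofReal_integral_eq_lintegral_ofReal hg2 hgnn
  have hgfin : (∫⁻ p in S, ENNReal.ofReal (‖g p‖ ^ 2)) ≠ ∞ := by
    rw [← hgl]; exact ENNReal.ofReal_ne_top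
  have hufin : (∫⁻ p in S, ENNReal.ofReal (‖u p‖ ^ 2)) ≠ ∞ := by
    refine ne_top_of_le_ne_top ?_ hlin
    exact ENNReal.mul_ne_top ENNReal.ofReal_ne_top hgfin
  have huint : IntegrableOn (fun p => ‖u p‖ ^ 2) S := by
    constructor
    · exact ((hu.norm).pow_const 2).aestronglyMeasurable
    · rw [hasFiniteIntegral_iff_ofReal (Filter.Eventually.of_forall fun p => by positivity)]
      exact lt_top_iff_ne_top.2 hufin
  have hul : ENNReal.ofReal (∫ p in S, ‖u p‖ ^ 2)
      = ∫⁻ p in S, ENNReal.ofReal (‖u p‖ ^ 2) :=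
    ofReal_integral_eq_lintegral_ofReal huint
      (Filter.Eventually.of_forall fun p => by positivity)
  have hunn : 0 ≤ ∫ p in S, ‖u p‖ ^ 2 :=
    integral_nonneg fun p => by positivity
  have hgnn' : 0 ≤ ∫ p in S, ‖g p‖ ^ 2 :=
    integral_nonneg fun p => by positivity
  have hreal : ∫ p in S, ‖u p‖ ^ 2 ≤ 5 * b ^ 2 / 12 * ∫ p in S, ‖g p‖ ^ 2 := by
    have h1 : ENNReal.ofReal (∫ p in S, ‖u p‖ ^ 2)
        ≤ ENNReal.ofReal (5 * b ^ 2 / 12 * ∫ p in S, ‖g p‖ ^ 2) := by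
      rw [hul, ENNReal.ofReal_mul (by positivity), hgl]
      exact hlin
    exact (ENNReal.ofReal_le_ofReal_iff (by positivity)).1 h1
  have hconst := const_bound
  have hb2 : b ^ 2 = β ^ 2 * L ^ 2 := by rw [hbdef]; ring
  have h3 : 5 / 12 * (β ^ 2 * L ^ 2 * ∫ p in S, ‖g p‖ ^ 2)
      ≤ ((3 : ℝ) ^ (-(2 : ℝ) / 3)
          * ((1 / Real.sqrt 3) * (2 * Real.Gamma 3)
              / (Real.Gamma (1 / 2) * Real.Gamma (5 / 2))) ^ 2)
        * (β ^ 2 * L ^ 2 * ∫ p in S, ‖g p‖ ^ 2) :=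
    mul_le_mul_of_nonneg_right hconst
      (mul_nonneg (mul_nonneg (sq_nonneg β) (sq_nonneg L)) hgnn')
  calc ∫ p in S, ‖u p‖ ^ 2 ≤ 5 * b ^ 2 / 12 * ∫ p in S, ‖g p‖ ^ 2 := hreal
    _ = 5 / 12 * (β ^ 2 * L ^ 2 * ∫ p in S, ‖g p‖ ^ 2) := by rw [hb2]; ring
    _ ≤ ((3 : ℝ) ^ (-(2 : ℝ) / 3)
          * ((1 / Real.sqrt 3) * (2 * Real.Gamma 3)
              / (Real.Gamma (1 / 2) * Real.Gamma (5 / 2))) ^ 2)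
        * (β ^ 2 * L ^ 2 * ∫ p in S, ‖g p‖ ^ 2) := h3
    _ = (3 : ℝ) ^ (-(2 : ℝ) / 3)
          * ((1 / Real.sqrt 3) * (2 * Real.Gamma 3)
              / (Real.Gamma (1 / 2) * Real.Gamma (5 / 2))) ^ 2
          * β ^ 2 * L ^ 2 * ∫ p in S, ‖g p‖ ^ 2 := by ring
end
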